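/- arXiv:1607.00041 — 2 statements merged into one kernel-verified Lean document; each statement's English description precedes it below -/
import Mathlib

section
/- Let σ be a full-rank state in M_d and p > 1. Then the supremum over all states ρ of the sandwiched p-Rényi divergence D_p(ρ‖σ) equals log(‖σ^{-1}‖_∞), where ‖σ^{-1}‖_∞ is the operator norm of σ^{-1} (i.e. the reciprocal of the smallest eigenvalue of σ), and this supremum is attained. -/
open scoped BigOperators Matrix ComplexOrder

noncomputable section

namespace SRC

variable {ι : Type*} [Fintype ι] [DecidableEq ι]

/-- Real power of a Hermitian matrix via the spectral decomposition
(junk value `0` on non-Hermitian input). -/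
def mpow (A : Matrix ι ι ℂ) (c : ℝ) : Matrix ι ι ℂ :=
  if hA : A.IsHermitian then
    (hA.eigenvectorUnitary : Matrix ι ι ℂ) *
      Matrix.diagonal (fun i => ((hA.eigenvalues i ^ c : ℝ) : ℂ)) *
      star (hA.eigenvectorUnitary : Matrix ι ι ℂ)
  else 0

/-- Logarithm of a Hermitian matrix via the spectral decomposition. -/
def mlog (A : Matrix ι ι ℂ) : Matrix ι ι ℂ :=
  if hA : A.IsHermitian then
    (hA.eigenvectorUnitary : Matrix ι ι ℂ) *
      Matrix.diagonal (fun i => ((Real.log (hA.eigenvalues i) : ℝ) : ℂ)) *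
      star (hA.eigenvectorUnitary : Matrix ι ι ℂ)
  else 0

/-- Real part of the trace. -/
def rtr (A : Matrix ι ι ℂ) : ℝ := (Matrix.trace A).re

/-- Absolute value |A| = (AᴴA)^{1/2} of a matrix. -/
def mabs (A : Matrix ι ι ℂ) : Matrix ι ι ℂ := mpow (Aᴴ * A) (1/2)

/-- Trace norm. -/
def traceNorm (A : Matrix ι ι ℂ) : ℝ := rtr (mabs A)

/-- Operator norm of a Hermitian matrix: the largest absolute value of an eigenvalue. -/
def opNorm (A : Matrix ι ι ℂ) : ℝ :=
  if hA : A.IsHermitian then ⨆ i, |hA.eigenvalues i| else 0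

/-- Weighted noncommutative `p`-norm `‖X‖_{p,σ}`. -/
def wnorm (σ : Matrix ι ι ℂ) (p : ℝ) (X : Matrix ι ι ℂ) : ℝ :=
  (rtr (mpow (mabs (mpow σ (1/(2*p)) * X * mpow σ (1/(2*p)))) p)) ^ (1/p)

/-- Weighted inner product `⟨X,Y⟩_σ = tr[σ^{1/2} X σ^{1/2} Y]` (real part). -/
def winner (σ X Y : Matrix ι ι ℂ) : ℝ := rtr (mpow σ (1/2) * X * mpow σ (1/2) * Y)

/-- Conjugation `X ↦ A X A` as a linear map. -/
def conjLin (A : Matrix ι ι ℂ) : Matrix ι ι ℂ →ₗ[ℂ] Matrix ι ι ℂ where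
  toFun X := A * X * A
  map_add' X Y := by simp [Matrix.mul_add, Matrix.add_mul]
  map_smul' c X := by simp [Matrix.mul_smul, Matrix.smul_mul]

/-- `Φ̂ = Γ_σ^{-1} ∘ Φ ∘ Γ_σ` where `Γ_σ(X) = σ^{1/2} X σ^{1/2}`. -/
def hatMap (σ : Matrix ι ι ℂ) (Φ : Matrix ι ι ℂ →ₗ[ℂ] Matrix ι ι ℂ) :
    Matrix ι ι ℂ →ₗ[ℂ] Matrix ι ι ℂ :=
  (conjLin (mpow σ (-(1/2)))).comp (Φ.comp (conjLin (mpow σ (1/2))))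

/-- The power operator `I_{r,p}(X) = σ^{-1/(2r)} (σ^{1/(2p)} X σ^{1/(2p)})^{p/r} σ^{-1/(2r)}`. -/
def Ipow (σ : Matrix ι ι ℂ) (r p : ℝ) (X : Matrix ι ι ℂ) : Matrix ι ι ℂ :=
  mpow σ (-(1/(2*r))) * mpow (mpow σ (1/(2*p)) * X * mpow σ (1/(2*p))) (p/r) *
    mpow σ (-(1/(2*r)))

/-- The `p`-Dirichlet form `E_p(X) = -(p/(2(p-1))) ⟨I_{q,p}(X), L̂(X)⟩_σ` with `1/p + 1/q = 1`. -/
def dirichlet (σ : Matrix ι ι ℂ) (L : Matrix ι ι ℂ →ₗ[ℂ] Matrix ι ι ℂ) (p : ℝ)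
    (X : Matrix ι ι ℂ) : ℝ :=
  -(p/(2*(p-1))) * winner σ (Ipow σ (p/(p-1)) p X) (hatMap σ L X)

/-- The `2`-Dirichlet form `E_2(X) = -⟨X, L̂(X)⟩_σ`. -/
def dirichlet2 (σ : Matrix ι ι ℂ) (L : Matrix ι ι ℂ →ₗ[ℂ] Matrix ι ι ℂ)
    (X : Matrix ι ι ℂ) : ℝ :=
  -winner σ X (hatMap σ L X)

/-- `κ_p(X) = (1/(p-1)) ‖X‖_{p,σ}^p log(‖X‖_{p,σ}^p / ‖X‖_{1,σ}^p)`. -/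
def kappa (σ : Matrix ι ι ℂ) (p : ℝ) (X : Matrix ι ι ℂ) : ℝ :=
  (1/(p-1)) * (wnorm σ p X) ^ p * Real.log ((wnorm σ p X) ^ p / (wnorm σ 1 X) ^ p)

/-- `β_p(L)`. -/
def betaP (σ : Matrix ι ι ℂ) (L : Matrix ι ι ℂ →ₗ[ℂ] Matrix ι ι ℂ) (p : ℝ) : ℝ :=
  sSup {β : ℝ | 0 ≤ β ∧ ∀ X : Matrix ι ι ℂ, X.PosDef → β * kappa σ p X ≤ dirichlet σ L p X}

/-- `β_2(L)` (defined with the `2`-Dirichlet form). -/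
def beta2 (σ : Matrix ι ι ℂ) (L : Matrix ι ι ℂ →ₗ[ℂ] Matrix ι ι ℂ) : ℝ :=
  sSup {β : ℝ | 0 ≤ β ∧ ∀ X : Matrix ι ι ℂ, X.PosDef → β * kappa σ 2 X ≤ dirichlet2 σ L X}

/-- Variance `Var_σ(X) = ‖X‖_{2,σ}² - ‖X‖_{1,σ}²`. -/
def Var (σ X : Matrix ι ι ℂ) : ℝ := (wnorm σ 2 X) ^ (2:ℝ) - (wnorm σ 1 X) ^ (2:ℝ)

/-- Spectral gap `λ(L)`. -/
def gap (σ : Matrix ι ι ℂ) (L : Matrix ι ι ℂ →ₗ[ℂ] Matrix ι ι ℂ) : ℝ :=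
  sSup {lam : ℝ | 0 ≤ lam ∧ ∀ X : Matrix ι ι ℂ, X.PosDef → lam * Var σ X ≤ dirichlet2 σ L X}

/-- Operator-valued relative entropy `S_p(X) = -p (d/ds) I_{p+s,p}(X)|_{s=0}` (entrywise). -/
def Sp (σ : Matrix ι ι ℂ) (p : ℝ) (X : Matrix ι ι ℂ) : Matrix ι ι ℂ :=
  Matrix.of fun i j => -(p : ℂ) * deriv (fun s : ℝ => Ipow σ (p + s) p X i j) 0

/-- `p`-relative entropy `Ent_{p,σ}(X)`. -/
def entP (σ : Matrix ι ι ℂ) (p : ℝ) (X : Matrix ι ι ℂ) : ℝ :=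
  winner σ (Ipow σ (p/(p-1)) p X) (Sp σ p X) - (wnorm σ p X) ^ p * Real.log (wnorm σ p X)

/-- Logarithmic Sobolev constant `α_p(L)`. -/
def alphaP (σ : Matrix ι ι ℂ) (L : Matrix ι ι ℂ →ₗ[ℂ] Matrix ι ι ℂ) (p : ℝ) : ℝ :=
  sSup {α : ℝ | 0 ≤ α ∧ ∀ X : Matrix ι ι ℂ, X.PosDef → α * entP σ p X ≤ dirichlet σ L p X}

/-- Explicit `2`-relative entropy. -/
def ent2 (σ X : Matrix ι ι ℂ) : ℝ :=
  rtr ((mpow σ (1/4) * X * mpow σ (1/4)) ^ 2 *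
      mlog ((wnorm σ 2 X)⁻¹ • (mpow σ (1/4) * X * mpow σ (1/4)))) -
    (1/2) * rtr ((mpow σ (1/4) * X * mpow σ (1/4)) ^ 2 * mlog σ)

/-- Logarithmic Sobolev constant `α_2(L)`. -/
def alpha2 (σ : Matrix ι ι ℂ) (L : Matrix ι ι ℂ →ₗ[ℂ] Matrix ι ι ℂ) : ℝ :=
  sSup {α : ℝ | 0 ≤ α ∧ ∀ X : Matrix ι ι ℂ, X.PosDef → α * ent2 σ X ≤ dirichlet2 σ L X}

/-- Sandwiched `p`-Rényi divergence. -/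
def sandDiv (p : ℝ) (ρ σ : Matrix ι ι ℂ) : ℝ :=
  (1/(p-1)) * Real.log (rtr (mpow (mpow σ ((1-p)/(2*p)) * ρ * mpow σ ((1-p)/(2*p))) p))

/-- A quantum state. -/
def IsState (ρ : Matrix ι ι ℂ) : Prop := ρ.PosSemidef ∧ ρ.trace = 1

/-- Complete positivity. -/
def IsCP (Φ : Matrix ι ι ℂ →ₗ[ℂ] Matrix ι ι ℂ) : Prop :=
  ∀ (n : ℕ) (M : Matrix (Fin n × ι) (Fin n × ι) ℂ), M.PosSemidef →
    (Matrix.of fun (r c : Fin n × ι) => Φ (Matrix.of fun a b => M (r.1, a) (c.1, b)) r.2 c.2).PosSemidef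

/-- Trace preservation. -/
def IsTP (Φ : Matrix ι ι ℂ →ₗ[ℂ] Matrix ι ι ℂ) : Prop :=
  ∀ X : Matrix ι ι ℂ, (Φ X).trace = X.trace

/-- Quantum channel: completely positive and trace preserving. -/
def IsChannel (Φ : Matrix ι ι ℂ →ₗ[ℂ] Matrix ι ι ℂ) : Prop := IsCP Φ ∧ IsTP Φ

/-- The semigroup `e^{tL}` generated by a linear map `L` on matrices. -/
def expMap (L : Matrix ι ι ℂ →ₗ[ℂ] Matrix ι ι ℂ) (t : ℝ) :
    Matrix ι ι ℂ →ₗ[ℂ] Matrix ι ι ℂ :=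
  Matrix.toLin (Matrix.stdBasis ℂ ι ι) (Matrix.stdBasis ℂ ι ι)
    (NormedSpace.exp
      ((t : ℂ) • LinearMap.toMatrix (Matrix.stdBasis ℂ ι ι) (Matrix.stdBasis ℂ ι ι) L))

/-- Liouvillian: generator of a semigroup of quantum channels. -/
def IsLiouvillian (L : Matrix ι ι ℂ →ₗ[ℂ] Matrix ι ι ℂ) : Prop :=
  ∀ t : ℝ, 0 ≤ t → IsChannel (expMap L t)

/-- Primitive Liouvillian with (unique, full-rank) fixed point `σ`. -/
def IsPrimitive (L : Matrix ι ι ℂ →ₗ[ℂ] Matrix ι ι ℂ) (σ : Matrix ι ι ℂ) : Prop :=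
  IsLiouvillian L ∧ σ.PosDef ∧ σ.trace = 1 ∧ L σ = 0 ∧
    (∀ τ : Matrix ι ι ℂ, IsState τ → L τ = 0 → τ = σ) ∧
    ∀ ρ : Matrix ι ι ℂ, IsState ρ →
      Filter.Tendsto (fun t : ℝ => expMap L t ρ) Filter.atTop (nhds σ)

/-- Reversibility (detailed balance): `L̂ = L*` w.r.t. the Hilbert–Schmidt inner product. -/
def IsReversible (σ : Matrix ι ι ℂ) (L : Matrix ι ι ℂ →ₗ[ℂ] Matrix ι ι ℂ) : Prop :=
  ∀ X Y : Matrix ι ι ℂ,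
    Matrix.trace ((hatMap σ L X)ᴴ * Y) = Matrix.trace (Xᴴ * L Y)

/-- Primitive quantum channel with full-rank fixed point `σ`. -/
def IsPrimitiveChannel (T : Matrix ι ι ℂ →ₗ[ℂ] Matrix ι ι ℂ) (σ : Matrix ι ι ℂ) : Prop :=
  IsChannel T ∧ σ.PosDef ∧ σ.trace = 1 ∧ T σ = σ ∧
    ∀ ρ : Matrix ι ι ℂ, IsState ρ →
      Filter.Tendsto (fun n : ℕ => (⇑T)^[n] ρ) Filter.atTop (nhds σ)

/-- The constant `β_D(T)` for a quantum channel. -/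
def betaD (σ : Matrix ι ι ℂ) (T : Matrix ι ι ℂ →ₗ[ℂ] Matrix ι ι ℂ) : ℝ :=
  sSup {β : ℝ | 0 ≤ β ∧ ∀ X : Matrix ι ι ℂ, X.PosDef →
    β * kappa σ 2 X ≤ (wnorm σ 2 X) ^ (2:ℝ) - (wnorm σ 2 (hatMap σ T X)) ^ (2:ℝ)}

/-- Hilbert–Schmidt adjoint of a linear map on matrices. -/
def hsAdjoint (T : Matrix ι ι ℂ →ₗ[ℂ] Matrix ι ι ℂ) : Matrix ι ι ℂ →ₗ[ℂ] Matrix ι ι ℂ where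
  toFun X := Matrix.of fun i j => Matrix.trace ((T (Matrix.single i j 1))ᴴ * X)
  map_add' X Y := by
    ext i j
    simp [Matrix.mul_add, Matrix.trace_add]
  map_smul' c X := by
    ext i j
    simp [Matrix.mul_smul, Matrix.trace_smul]

/-- The depolarizing Liouvillian `ρ ↦ tr(ρ)·σ - ρ`. -/
def depol (σ : Matrix ι ι ℂ) : Matrix ι ι ℂ →ₗ[ℂ] Matrix ι ι ℂ where
  toFun ρ := ρ.trace • σ - ρ
  map_add' ρ₁ ρ₂ := by
    simp [Matrix.trace_add, add_smul]
    abel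
  map_smul' c ρ := by
    simp [Matrix.trace_smul, smul_smul, smul_sub]

/-- Action of a map on the `i`-th tensor factor: `id^{⊗(i-1)} ⊗ Φ ⊗ id^{⊗(n-i)}`. -/
def localApply {d : ℕ} (n : ℕ)
    (Φ : Matrix (Fin d) (Fin d) ℂ →ₗ[ℂ] Matrix (Fin d) (Fin d) ℂ) (i : Fin n) :
    Matrix (Fin n → Fin d) (Fin n → Fin d) ℂ →ₗ[ℂ] Matrix (Fin n → Fin d) (Fin n → Fin d) ℂ where
  toFun M := Matrix.of fun x y =>
    Φ (Matrix.of fun a b => M (Function.update x i a) (Function.update y i b)) (x i) (y i)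
  map_add' M N := by
    ext x y
    have h : (Matrix.of fun a b => (M + N) (Function.update x i a) (Function.update y i b)) =
        (Matrix.of fun a b => M (Function.update x i a) (Function.update y i b)) +
        (Matrix.of fun a b => N (Function.update x i a) (Function.update y i b)) := rfl
    show Φ (Matrix.of fun a b => (M + N) (Function.update x i a) (Function.update y i b))
        (x i) (y i) = _
    rw [h, map_add]
    rfl
  map_smul' c M := by
    ext x y
    have h : (Matrix.of fun a b => (c • M) (Function.update x i a) (Function.update y i b)) =
        c • (Matrix.of fun a b => M (Function.update x i a) (Function.update y i b)) := rfl
    show Φ (Matrix.of fun a b => (c • M) (Function.update x i a) (Function.update y i b))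
        (x i) (y i) = _
    rw [h, map_smul]
    rfl

/-- The tensor power `σ^{⊗n}` of a matrix. -/
def tensPow {d : ℕ} (σ : Matrix (Fin d) (Fin d) ℂ) (n : ℕ) :
    Matrix (Fin n → Fin d) (Fin n → Fin d) ℂ :=
  Matrix.of fun x y => ∏ i, σ (x i) (y i)

end SRC

/-!
Diagonalise `σ = U diag(e) U⋆` and let `λ = eᵢ₀` be its smallest eigenvalue, so that
`‖σ⁻¹‖_∞ = λ⁻¹`. With `c = (1-p)/(2p)` and `A = σ^c ρ σ^c ≥ 0` we have
`tr A^p ≤ (tr A)^p` (superadditivity of `x ↦ x^p` on eigenvalues) and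
`tr A = tr(σ^{2c} ρ) ≤ λ^{2c}`, hence `D_p(ρ‖σ) ≤ (1/(p-1)) log λ^{2cp} = -log λ`.
Equality holds for the projection `ρ` onto the `λ`-eigenvector, where `A = λ^{2c} ρ`.
-/

namespace SRC

open Matrix Unitary

variable {ι : Type*} [Fintype ι]

lemma IsState.nonempty {ρ : Matrix ι ι ℂ} (hρ : IsState ρ) : Nonempty ι := by
  by_contra h
  rw [not_nonempty_iff] at h
  simpa [trace] using hρ.2

variable [DecidableEq ι]

def conjDiagonal (U : unitaryGroup ι ℂ) (g : ι → ℝ) : Matrix ι ι ℂ :=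
  conjStarAlgAut ℂ _ U (diagonal fun i => (g i : ℂ))

lemma conjDiagonal_mul (U : unitaryGroup ι ℂ) (g h : ι → ℝ) :
    conjDiagonal U g * conjDiagonal U h = conjDiagonal U (g * h) := by
  simp only [conjDiagonal, ← map_mul, diagonal_mul_diagonal, Pi.mul_apply, Complex.ofReal_mul]

lemma conjDiagonal_one (U : unitaryGroup ι ℂ) : conjDiagonal U 1 = 1 := by
  simp [conjDiagonal]

lemma trace_conjDiagonal (U : unitaryGroup ι ℂ) (g : ι → ℝ) :
    (conjDiagonal U g).trace = ∑ i, (g i : ℂ) := by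
  rw [conjDiagonal, conjStarAlgAut_apply, trace_mul_cycle, coe_star_mul_self,
    Matrix.one_mul, trace_diagonal]

lemma isHermitian_conjDiagonal (U : unitaryGroup ι ℂ) (g : ι → ℝ) :
    (conjDiagonal U g).IsHermitian := by
  have hD : (diagonal fun i => (g i : ℂ)).IsHermitian :=
    isHermitian_diagonal_of_self_adjoint _ (funext fun i => Complex.conj_ofReal (g i))
  simpa [conjDiagonal, ← star_eq_conjTranspose] using
    isHermitian_mul_mul_conjTranspose (U : Matrix ι ι ℂ) hD

lemma posSemidef_conjDiagonal (U : unitaryGroup ι ℂ) {g : ι → ℝ} (hg : ∀ i, 0 ≤ g i) :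
    (conjDiagonal U g).PosSemidef := by
  have hD : (diagonal fun i => (g i : ℂ)).PosSemidef :=
    PosSemidef.diagonal fun i => Complex.zero_le_real.mpr (hg i)
  simpa [conjDiagonal, ← star_eq_conjTranspose] using
    hD.mul_mul_conjTranspose_same (U : Matrix ι ι ℂ)

lemma eq_conjDiagonal_eigenvalues {A : Matrix ι ι ℂ} (hA : A.IsHermitian) :
    A = conjDiagonal hA.eigenvectorUnitary hA.eigenvalues :=
  hA.spectral_theorem

lemma mpow_eq_conjDiagonal {A : Matrix ι ι ℂ} (hA : A.IsHermitian) (c : ℝ) :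
    mpow A c = conjDiagonal hA.eigenvectorUnitary (fun i => hA.eigenvalues i ^ c) := by
  rw [mpow, dif_pos hA]
  rfl

lemma rtr_mpow {A : Matrix ι ι ℂ} (hA : A.IsHermitian) (c : ℝ) :
    rtr (mpow A c) = ∑ i, hA.eigenvalues i ^ c := by
  simp [rtr, mpow_eq_conjDiagonal hA, trace_conjDiagonal, Complex.re_sum]

lemma isHermitian_mpow {A : Matrix ι ι ℂ} (hA : A.IsHermitian) (c : ℝ) :
    (mpow A c).IsHermitian :=
  mpow_eq_conjDiagonal hA c ▸ isHermitian_conjDiagonal _ _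

lemma rtr_mpow_nonneg {A : Matrix ι ι ℂ} (hA : A.PosSemidef) (c : ℝ) : 0 ≤ rtr (mpow A c) := by
  rw [rtr_mpow hA.1]
  exact Finset.sum_nonneg fun i _ => Real.rpow_nonneg (hA.eigenvalues_nonneg i) c

lemma posSemidef_mpow_mul_mul_mpow {σ ρ : Matrix ι ι ℂ} (hσ : σ.IsHermitian)
    (hρ : ρ.PosSemidef) (c : ℝ) : (mpow σ c * ρ * mpow σ c).PosSemidef := by
  simpa [(isHermitian_mpow hσ c).eq] using hρ.conjTranspose_mul_mul_same (mpow σ c)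

lemma map_eigenvalues_eq_of_eq_conjDiagonal {A : Matrix ι ι ℂ} (hA : A.IsHermitian)
    {U : unitaryGroup ι ℂ} {g : ι → ℝ} (h : A = conjDiagonal U g) :
    Finset.univ.val.map hA.eigenvalues = Finset.univ.val.map g := by
  have hchar : A.charpoly.roots = (Finset.univ.val.map g).map ((↑) : ℝ → ℂ) := by
    rw [h, conjDiagonal, conjStarAlgAut_apply, charpoly_mul_comm, ← Matrix.mul_assoc,
      coe_star_mul_self, Matrix.one_mul, charpoly_diagonal, Polynomial.roots_prod]
    · simp [Multiset.map_map]
    · simp [Finset.prod_ne_zero_iff, Polynomial.X_sub_C_ne_zero]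
  rw [hA.roots_charpoly_eq_eigenvalues, ← Multiset.map_map] at hchar
  exact Multiset.map_injective Complex.ofReal_injective hchar

lemma rtr_mpow_conjDiagonal (U : unitaryGroup ι ℂ) (g : ι → ℝ) (c : ℝ) :
    rtr (mpow (conjDiagonal U g) c) = ∑ i, g i ^ c := by
  have hA := isHermitian_conjDiagonal U g
  rw [rtr_mpow hA]
  have h := congrArg (fun s => (s.map (· ^ c)).sum) (map_eigenvalues_eq_of_eq_conjDiagonal hA rfl)
  simp only [Multiset.map_map] at h
  exact h

lemma opNorm_conjDiagonal (U : unitaryGroup ι ℂ) (g : ι → ℝ) :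
    opNorm (conjDiagonal U g) = ⨆ i, |g i| := by
  have hA := isHermitian_conjDiagonal U g
  have hrange : Set.range hA.eigenvalues = Set.range g := by
    ext x
    simpa using congrArg (x ∈ ·) (map_eigenvalues_eq_of_eq_conjDiagonal hA rfl)
  rw [opNorm, dif_pos hA, iSup, iSup, Set.range_comp' (|·|), hrange, ← Set.range_comp']

lemma re_trace_conjDiagonal_mul_le (U : unitaryGroup ι ℂ) {g : ι → ℝ} {M : ℝ}
    (hg : ∀ i, g i ≤ M) {ρ : Matrix ι ι ℂ} (hρ : ρ.PosSemidef) :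
    (conjDiagonal U g * ρ).trace.re ≤ M * ρ.trace.re := by
  set ρ' := star (U : Matrix ι ι ℂ) * ρ * U
  have hρ' : ρ'.PosSemidef := by
    simpa [ρ', star_eq_conjTranspose] using hρ.conjTranspose_mul_mul_same (U : Matrix ι ι ℂ)
  have htr : ρ'.trace = ρ.trace := by
    rw [trace_mul_cycle, mul_star_self_of_mem U.2, Matrix.one_mul]
  have htrg : (conjDiagonal U g * ρ).trace = ∑ i, (g i : ℂ) * ρ' i i := by
    rw [conjDiagonal, conjStarAlgAut_apply, Matrix.mul_assoc, Matrix.mul_assoc, trace_mul_comm]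
    simp only [trace, diag, ρ', diagonal_mul, Matrix.mul_assoc]
  rw [htrg, ← htr, trace, Complex.re_sum, Complex.re_sum, Finset.mul_sum]
  refine Finset.sum_le_sum fun i _ => ?_
  rw [Complex.re_ofReal_mul]
  exact mul_le_mul_of_nonneg_right (hg i) (Complex.le_def.mp hρ'.diag_nonneg).1

lemma sum_rpow_le_rpow_sum {α : Type*} (s : Finset α) {a : α → ℝ} (ha : ∀ i ∈ s, 0 ≤ a i)
    {p : ℝ} (hp : 1 ≤ p) : ∑ i ∈ s, a i ^ p ≤ (∑ i ∈ s, a i) ^ p := by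
  have hsum : 0 ≤ ∑ i ∈ s, a i := Finset.sum_nonneg ha
  have hp' : p - 1 + 1 ≠ 0 := by linarith
  calc ∑ i ∈ s, a i ^ p = ∑ i ∈ s, a i ^ (p - 1) * a i := by
        refine Finset.sum_congr rfl fun i hi => ?_
        rw [← Real.rpow_add_one' (ha i hi) hp', sub_add_cancel]
    _ ≤ ∑ i ∈ s, (∑ j ∈ s, a j) ^ (p - 1) * a i := by
        refine Finset.sum_le_sum fun i hi => mul_le_mul_of_nonneg_right ?_ (ha i hi)
        exact Real.rpow_le_rpow (ha i hi) (Finset.single_le_sum ha hi) (by linarith)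
    _ = (∑ i ∈ s, a i) ^ p := by
        rw [← Finset.mul_sum, ← Real.rpow_add_one' hsum hp', sub_add_cancel]

/-- The hypothesis `1 ≤ y` absorbs the junk value `Real.log 0 = 0`. -/
lemma log_le_log_of_le_of_one_le {x y : ℝ} (hx : 0 ≤ x) (hxy : x ≤ y) (hy : 1 ≤ y) :
    Real.log x ≤ Real.log y := by
  rcases hx.eq_or_lt with rfl | hx
  · rw [Real.log_zero]
    exact Real.log_nonneg hy
  · exact Real.log_le_log hx hxy

lemma IsState.eigenvalues_le_one {ρ : Matrix ι ι ℂ} (hρ : IsState ρ) (i : ι) :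
    hρ.1.1.eigenvalues i ≤ 1 := by
  have hsum : ∑ j, hρ.1.1.eigenvalues j = 1 := by
    have h := congrArg Complex.re (hρ.1.1.trace_eq_sum_eigenvalues.symm.trans hρ.2)
    simpa [Complex.re_sum] using h
  rw [← hsum]
  exact Finset.single_le_sum (fun j _ => hρ.1.eigenvalues_nonneg j) (Finset.mem_univ i)

lemma isState_conjDiagonal_single (U : unitaryGroup ι ℂ) (i : ι) :
    IsState (conjDiagonal U (Pi.single i 1)) := by
  refine ⟨posSemidef_conjDiagonal U fun j => ?_, ?_⟩
  · rw [Pi.single_apply]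
    split_ifs <;> norm_num
  · simp [trace_conjDiagonal, Pi.single_apply, apply_ite]

lemma rtr_mpow_sandwich_le {σ ρ : Matrix ι ι ℂ} (hσ : σ.PosDef) (hρ : IsState ρ) {μ c p : ℝ}
    (hμ : 0 < μ) (hμσ : ∀ i, μ ≤ hσ.1.eigenvalues i) (hc : c ≤ 0) (hp : 1 ≤ p) :
    rtr (mpow (mpow σ c * ρ * mpow σ c) p) ≤ μ ^ (2 * c * p) := by
  set U := hσ.1.eigenvectorUnitary
  set B := mpow σ c
  have hB : B = conjDiagonal U fun i => hσ.1.eigenvalues i ^ c := mpow_eq_conjDiagonal hσ.1 c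
  have hA : (B * ρ * B).PosSemidef := posSemidef_mpow_mul_mul_mpow hσ.1 hρ.1 c
  have hBB : ∀ i, hσ.1.eigenvalues i ^ c * hσ.1.eigenvalues i ^ c ≤ μ ^ (2 * c) := fun i => by
    rw [← Real.rpow_add (hσ.eigenvalues_pos i), ← two_mul]
    exact Real.rpow_le_rpow_of_nonpos hμ (hμσ i) (by linarith)
  have htrA : rtr (B * ρ * B) ≤ μ ^ (2 * c) := by
    calc rtr (B * ρ * B) = (conjDiagonal U (fun i => hσ.1.eigenvalues i ^ c) *
          conjDiagonal U (fun i => hσ.1.eigenvalues i ^ c) * ρ).trace.re := by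
          rw [rtr, trace_mul_cycle, hB]
      _ ≤ μ ^ (2 * c) * ρ.trace.re := by
          rw [conjDiagonal_mul]
          exact re_trace_conjDiagonal_mul_le U hBB hρ.1
      _ = μ ^ (2 * c) := by simp [hρ.2]
  have hsum : ∑ i, hA.1.eigenvalues i = rtr (B * ρ * B) := by
    simp [rtr, hA.1.trace_eq_sum_eigenvalues, Complex.re_sum]
  calc rtr (mpow (B * ρ * B) p) = ∑ i, hA.1.eigenvalues i ^ p := rtr_mpow hA.1 p
    _ ≤ (∑ i, hA.1.eigenvalues i) ^ p :=
        sum_rpow_le_rpow_sum _ (fun i _ => hA.eigenvalues_nonneg i) hp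
    _ ≤ (μ ^ (2 * c)) ^ p :=
        Real.rpow_le_rpow (Finset.sum_nonneg fun i _ => hA.eigenvalues_nonneg i)
          (hsum ▸ htrA) (by linarith)
    _ = μ ^ (2 * c * p) := by rw [← Real.rpow_mul hμ.le]

lemma rtr_mpow_sandwich_eigenprojection {σ : Matrix ι ι ℂ} (hσ : σ.PosDef) (i : ι) (c : ℝ)
    {p : ℝ} (hp : p ≠ 0) :
    rtr (mpow (mpow σ c * conjDiagonal hσ.1.eigenvectorUnitary (Pi.single i 1) * mpow σ c) p) =
      hσ.1.eigenvalues i ^ (2 * c * p) := by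
  have hprod : (fun j => hσ.1.eigenvalues j ^ c) * Pi.single i 1 * (fun j => hσ.1.eigenvalues j ^ c)
      = Pi.single i (hσ.1.eigenvalues i ^ (2 * c)) := by
    ext j
    rcases eq_or_ne j i with rfl | hj
    · simp [← Real.rpow_add (hσ.eigenvalues_pos j), two_mul]
    · simp [hj]
  rw [mpow_eq_conjDiagonal hσ.1, conjDiagonal_mul, conjDiagonal_mul, hprod,
    rtr_mpow_conjDiagonal, Finset.sum_eq_single i (fun j _ hj => by simp [hj, hp]) (by simp),
    Pi.single_eq_same, ← Real.rpow_mul (hσ.eigenvalues_pos i).le]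

lemma opNorm_inv_eq {σ : Matrix ι ι ℂ} (hσ : σ.PosDef) {i₀ : ι}
    (hmin : ∀ i, hσ.1.eigenvalues i₀ ≤ hσ.1.eigenvalues i) :
    opNorm σ⁻¹ = (hσ.1.eigenvalues i₀)⁻¹ := by
  have hinv : σ⁻¹ = conjDiagonal hσ.1.eigenvectorUnitary hσ.1.eigenvalues⁻¹ := by
    refine inv_eq_right_inv ?_
    nth_rw 1 [eq_conjDiagonal_eigenvalues hσ.1]
    have he : hσ.1.eigenvalues * hσ.1.eigenvalues⁻¹ = 1 :=
      funext fun i => mul_inv_cancel₀ (hσ.eigenvalues_pos i).ne'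
    rw [conjDiagonal_mul, he, conjDiagonal_one]
  have hle : ∀ i, |hσ.1.eigenvalues⁻¹ i| ≤ (hσ.1.eigenvalues i₀)⁻¹ := fun i => by
    rw [Pi.inv_apply, abs_of_pos (inv_pos.2 (hσ.eigenvalues_pos i))]
    exact inv_anti₀ (hσ.eigenvalues_pos i₀) (hmin i)
  have : Nonempty ι := ⟨i₀⟩
  rw [hinv, opNorm_conjDiagonal]
  refine le_antisymm (ciSup_le hle) (le_ciSup_of_le (Set.finite_range _).bddAbove i₀ ?_)
  rw [Pi.inv_apply, abs_of_pos (inv_pos.2 (hσ.eigenvalues_pos i₀))]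

/-- For a full-rank state `σ` and `p > 1`, the supremum over all states `ρ`
of `D_p(ρ‖σ)` equals `log ‖σ⁻¹‖_∞`, and it is attained. -/
theorem statement_0 {d : ℕ} (σ : Matrix (Fin d) (Fin d) ℂ)
    (hσ : σ.PosDef) (hσ1 : σ.trace = 1) (p : ℝ) (hp : 1 < p) :
    IsGreatest {x : ℝ | ∃ ρ : Matrix (Fin d) (Fin d) ℂ, IsState ρ ∧ x = sandDiv p ρ σ}
      (Real.log (opNorm σ⁻¹)) := by
  have hσstate : IsState σ := ⟨hσ.posSemidef, hσ1⟩
  have : Nonempty (Fin d) := hσstate.nonempty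
  set e := hσ.1.eigenvalues
  obtain ⟨i₀, hmin⟩ := Finite.exists_min e
  have he₀ : 0 < e i₀ := hσ.eigenvalues_pos i₀
  have hexp : 2 * ((1 - p) / (2 * p)) * p = 1 - p := by field_simp
  have hvalue : 1 / (p - 1) * Real.log (e i₀ ^ (1 - p)) = Real.log (opNorm σ⁻¹) := by
    rw [opNorm_inv_eq hσ hmin, Real.log_rpow he₀, Real.log_inv]
    field_simp [(by linarith : p - 1 ≠ 0)]
    ring
  refine ⟨⟨_, isState_conjDiagonal_single hσ.1.eigenvectorUnitary i₀, ?_⟩, ?_⟩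
  · rw [← hvalue, sandDiv, rtr_mpow_sandwich_eigenprojection hσ i₀ _ (by linarith), hexp]
  · rintro _ ⟨ρ, hρ, rfl⟩
    have hle := rtr_mpow_sandwich_le hσ hρ he₀ hmin
      (c := (1 - p) / (2 * p)) (div_nonpos_of_nonpos_of_nonneg (by linarith) (by linarith)) hp.le
    rw [hexp] at hle
    have hone : 1 ≤ e i₀ ^ (1 - p) :=
      Real.one_le_rpow_of_pos_of_le_one_of_nonpos he₀ (hσstate.eigenvalues_le_one i₀) (by linarith)
    rw [← hvalue, sandDiv]
    exact mul_le_mul_of_nonneg_left (log_le_log_of_le_of_one_le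
      (rtr_mpow_nonneg (posSemidef_mpow_mul_mul_mpow hσ.1 hρ.1 _) p) hle hone)
      (by rw [one_div_nonneg]; linarith)

end SRC
end
end

section
/- Let d ≥ 2 and let L : M_d → M_d be the Liouvillian L(ρ) = tr(ρ)·(1/d)·𝟙_d − ρ depolarizing to the maximally mixed state. Then for every p ≥ 2: (p/(2(p−1)))·(1/log d) ≥ β_p(L) ≥ (p/(2(p−1)))·(d^{(p−1)/p} − 1)/(d^{(p−1)/p}·log d). -/
/-!
For `σ = 𝟙/d` every quantity entering `β_p` is a function of the eigenvalues `μ` of `X`: with the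
moments `M_k = 𝔼 μ^k` one has `κ_p(X) = M_p log (M_p / M_1^p) / (p - 1)` and
`E_p(X) = p / (2(p - 1)) · (M_p - M_1 M_{p-1})`.

Lower bound: put `s = log (M_p / M_1^p) / (p - 1)`, so `κ_p = M_p s` and `0 ≤ s ≤ log d` by
Jensen and `M_p ≤ d^{p-1} M_1^p`. Lyapunov's inequality (Hölder) gives `M_1 M_{p-1} ≤ M_p e^{-s}`,
and convexity of `exp` on `[-log d, 0]` gives `1 - e^{-s} ≥ (1 - 1/d) s / log d`. Hence
`M_p - M_1 M_{p-1} ≥ (1 - 1/d) κ_p / log d`, and `1 - 1/d ≥ 1 - d^{-(p-1)/p}`.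

Upper bound: for `X = diag(1, ε, …, ε)` with `ε` of order `log d / d²`,
`M_p - M_1 M_{p-1} ≤ (d - 1) / d²` while `κ_p(X) ≥ (d - 1) log d / d²`.
-/

open scoped BigOperators Matrix ComplexOrder

noncomputable section

namespace SRC

lemma exp_neg_le_one_sub_mul_div {s S : ℝ} (hs : 0 ≤ s) (hsS : s ≤ S) (hS : 0 < S) :
    Real.exp (-s) ≤ 1 - (1 - Real.exp (-S)) * (s / S) := by
  have ht : 0 ≤ s / S := div_nonneg hs hS.le
  have ht1 : 0 ≤ 1 - s / S := by rw [sub_nonneg, div_le_one hS]; exact hsS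
  have h := convexOn_exp.2 (Set.mem_univ 0) (Set.mem_univ (-S)) ht1 ht (by ring)
  rw [smul_eq_mul, smul_eq_mul, smul_eq_mul, smul_eq_mul, mul_zero, zero_add, Real.exp_zero,
    mul_neg, div_mul_cancel₀ s hS.ne'] at h
  linarith

section Moments

variable {ι : Type*} [Fintype ι]

def moment (μ : ι → ℝ) (k : ℝ) : ℝ := 𝔼 i, μ i ^ k

def momentKappa (μ : ι → ℝ) (p : ℝ) : ℝ :=
  1 / (p - 1) * moment μ p * Real.log (moment μ p / moment μ 1 ^ p)

def momentCov (μ : ι → ℝ) (p : ℝ) : ℝ := moment μ p - moment μ 1 * moment μ (p - 1)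

lemma moment_eq_inv_card_mul_sum (μ : ι → ℝ) (k : ℝ) :
    moment μ k = (Fintype.card ι : ℝ)⁻¹ * ∑ i, μ i ^ k := by
  rw [moment, Finset.expect_eq_sum_div_card, Finset.card_univ, inv_mul_eq_div]

lemma moment_one (μ : ι → ℝ) : moment μ 1 = 𝔼 i, μ i := by
  simp only [moment, Real.rpow_one]

lemma moment_nonneg {μ : ι → ℝ} (hμ : ∀ i, 0 ≤ μ i) (k : ℝ) : 0 ≤ moment μ k :=
  Finset.expect_nonneg fun i _ => Real.rpow_nonneg (hμ i) k

lemma moment_pos [Nonempty ι] {μ : ι → ℝ} (hμ : ∀ i, 0 < μ i) (k : ℝ) : 0 < moment μ k :=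
  Finset.expect_pos (fun i _ => Real.rpow_pos_of_pos (hμ i) k) Finset.univ_nonempty

lemma moment_one_rpow_le [Nonempty ι] {μ : ι → ℝ} (hμ : ∀ i, 0 ≤ μ i) {p : ℝ} (hp : 1 ≤ p) :
    moment μ 1 ^ p ≤ moment μ p := by
  have h := Real.compact_inner_le_weight_mul_Lp_of_nonneg Finset.univ hp (w := fun _ => 1)
    (fun _ => zero_le_one) hμ
  simp only [one_mul, Finset.expect_const Finset.univ_nonempty, Real.one_rpow] at h
  rw [moment_one]
  calc (𝔼 i, μ i) ^ p ≤ ((𝔼 i, μ i ^ p) ^ p⁻¹) ^ p :=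
        Real.rpow_le_rpow (Finset.expect_nonneg fun i _ => hμ i) h (by linarith)
    _ = moment μ p := Real.rpow_inv_rpow (moment_nonneg hμ p) (by linarith)

lemma le_card_mul_moment_one {μ : ι → ℝ} (hμ : ∀ i, 0 ≤ μ i) (i : ι) :
    μ i ≤ Fintype.card ι * moment μ 1 := by
  rw [moment_one, ← Finset.card_univ, Finset.card_mul_expect]
  exact Finset.single_le_sum (fun j _ => hμ j) (Finset.mem_univ i)

lemma moment_le_card_rpow_mul {μ : ι → ℝ} (hμ : ∀ i, 0 ≤ μ i) {p : ℝ} (hp : 1 ≤ p) :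
    moment μ p ≤ (Fintype.card ι : ℝ) ^ (p - 1) * moment μ 1 ^ p := by
  have hM := moment_nonneg hμ 1
  calc moment μ p = 𝔼 i, μ i ^ (p - 1) * μ i := by
        refine Finset.expect_congr rfl fun i _ => ?_
        rw [← Real.rpow_add_one' (hμ i) (by linarith), sub_add_cancel]
    _ ≤ 𝔼 i, (Fintype.card ι * moment μ 1) ^ (p - 1) * μ i :=
        Finset.expect_le_expect fun i _ => mul_le_mul_of_nonneg_right
          (Real.rpow_le_rpow (hμ i) (le_card_mul_moment_one hμ i) (by linarith)) (hμ i)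
    _ = (Fintype.card ι : ℝ) ^ (p - 1) * moment μ 1 ^ p := by
        rw [← Finset.mul_expect, ← moment_one, Real.mul_rpow (Nat.cast_nonneg _) hM, mul_assoc,
          ← Real.rpow_add_one' hM (by linarith), sub_add_cancel]

/-- Lyapunov's inequality, from Hölder's inequality with weights `μ` and exponent
`(p - 1) / (p - 2)`. -/
lemma moment_sub_one_le {μ : ι → ℝ} (hμ : ∀ i, 0 < μ i) {p : ℝ} (hp : 2 ≤ p) :
    moment μ (p - 1) ≤ moment μ 1 ^ (p - 1)⁻¹ * moment μ p ^ ((p - 2) / (p - 1)) := by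
  rcases hp.eq_or_lt with rfl | hp
  · norm_num
  have hr : 1 ≤ (p - 1) / (p - 2) := by rw [le_div_iff₀ (by linarith)]; linarith
  have h := Real.compact_inner_le_weight_mul_Lp_of_nonneg Finset.univ hr (w := μ)
    (f := fun i => μ i ^ (p - 2)) (fun i => (hμ i).le) (fun i => Real.rpow_nonneg (hμ i).le _)
  have hw : ∀ i, μ i * μ i ^ (p - 2) = μ i ^ (p - 1) := fun i => by
    rw [← Real.rpow_one_add' (hμ i).le (by linarith)]
    ring_nf
  have hwf : ∀ i, μ i * (μ i ^ (p - 2)) ^ ((p - 1) / (p - 2)) = μ i ^ p := fun i => by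
    rw [← Real.rpow_mul (hμ i).le, ← Real.rpow_one_add' (hμ i).le (by positivity)]
    congr 1
    field_simp
    ring
  have hr' : 1 - (p - 2) / (p - 1) = (p - 1)⁻¹ := by
    field_simp [show p - 1 ≠ 0 by linarith]
    ring
  simp only [hw, hwf, inv_div, hr'] at h
  rwa [moment_one, moment, moment]

lemma momentKappa_nonneg [Nonempty ι] {μ : ι → ℝ} (hμ : ∀ i, 0 < μ i) {p : ℝ} (hp : 1 < p) :
    0 ≤ momentKappa μ p := by
  have hM1 := moment_pos hμ 1
  have hMp := moment_pos hμ p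
  refine mul_nonneg (by positivity) (Real.log_nonneg ((one_le_div₀ (by positivity)).2 ?_))
  exact moment_one_rpow_le (fun i => (hμ i).le) hp.le

lemma moment_one_mul_moment_sub_one_le [Nonempty ι] {μ : ι → ℝ} (hμ : ∀ i, 0 < μ i) {p : ℝ}
    (hp : 2 ≤ p) :
    moment μ 1 * moment μ (p - 1) ≤
      moment μ p * Real.exp (-(Real.log (moment μ p / moment μ 1 ^ p) / (p - 1))) := by
  have hM1 := moment_pos hμ 1
  have hMp := moment_pos hμ p
  have hp1 : p - 1 ≠ 0 := by linarith
  calc moment μ 1 * moment μ (p - 1)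
      ≤ moment μ 1 * (moment μ 1 ^ (p - 1)⁻¹ * moment μ p ^ ((p - 2) / (p - 1))) :=
        mul_le_mul_of_nonneg_left (moment_sub_one_le hμ hp) hM1.le
    _ = Real.exp (Real.log (moment μ 1) + (Real.log (moment μ 1) * (p - 1)⁻¹ +
          Real.log (moment μ p) * ((p - 2) / (p - 1)))) := by
        rw [Real.exp_add, Real.exp_add, Real.exp_log hM1, ← Real.rpow_def_of_pos hM1,
          ← Real.rpow_def_of_pos hMp]
    _ = Real.exp (Real.log (moment μ p) - Real.log (moment μ p / moment μ 1 ^ p) / (p - 1)) := by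
        rw [Real.log_div hMp.ne' (by positivity), Real.log_rpow hM1]
        congr 1
        field_simp
        ring
    _ = _ := by rw [Real.exp_sub, Real.exp_log hMp, Real.exp_neg, div_eq_mul_inv]

lemma one_sub_inv_card_div_log_mul_momentKappa_le {μ : ι → ℝ} (hμ : ∀ i, 0 < μ i)
    (hn : 1 < Fintype.card ι) {p : ℝ} (hp : 2 ≤ p) :
    (1 - (Fintype.card ι : ℝ)⁻¹) / Real.log (Fintype.card ι) * momentKappa μ p ≤
      momentCov μ p := by
  have : Nonempty ι := Fintype.card_pos_iff.1 (by omega)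
  set n : ℝ := (Fintype.card ι : ℝ)
  have hlog : 0 < Real.log n := Real.log_pos (Nat.one_lt_cast.2 hn)
  have hp1 : 0 < p - 1 := by linarith
  have hM1 := moment_pos hμ 1
  have hMp := moment_pos hμ p
  set s := Real.log (moment μ p / moment μ 1 ^ p) / (p - 1) with hs_def
  have hs0 : 0 ≤ s := div_nonneg (Real.log_nonneg <| (one_le_div₀ (by positivity)).2 <|
    moment_one_rpow_le (fun i => (hμ i).le) (by linarith)) hp1.le
  have hsn : s ≤ Real.log n := by
    rw [div_le_iff₀ hp1, mul_comm, ← Real.log_rpow (by positivity)]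
    refine Real.log_le_log (by positivity) ((div_le_iff₀ (by positivity)).2 ?_)
    exact moment_le_card_rpow_mul (fun i => (hμ i).le) (by linarith)
  have hchord := exp_neg_le_one_sub_mul_div hs0 hsn hlog
  rw [Real.exp_neg (Real.log n), Real.exp_log (by positivity)] at hchord
  calc (1 - n⁻¹) / Real.log n * momentKappa μ p
      = moment μ p * ((1 - n⁻¹) * (s / Real.log n)) := by
        rw [momentKappa, hs_def]
        ring
    _ ≤ moment μ p * (1 - Real.exp (-s)) :=
        mul_le_mul_of_nonneg_left (by linarith) hMp.le
    _ ≤ momentCov μ p := by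
        rw [momentCov]
        linarith [moment_one_mul_moment_sub_one_le hμ hp]

section TestVector

variable [DecidableEq ι]

lemma moment_ite (i₀ : ι) (ε k : ℝ) :
    moment (fun i => if i = i₀ then 1 else ε) k =
      (1 + ((Fintype.card ι : ℝ) - 1) * ε ^ k) / Fintype.card ι := by
  have h : ∀ i, (if i = i₀ then (1 : ℝ) else ε) ^ k = ε ^ k + if i = i₀ then 1 - ε ^ k else 0 :=
    fun i => by split_ifs <;> simp
  rw [moment, Finset.expect_eq_sum_div_card, Finset.sum_congr rfl fun i _ => h i,
    Finset.sum_add_distrib, Fintype.sum_ite_eq', Finset.sum_const, nsmul_eq_mul, Finset.card_univ]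
  ring

lemma momentCov_ite_le (i₀ : ι) {ε : ℝ} (hε0 : 0 < ε) (hε1 : ε ≤ 1) {p : ℝ} (hp : 1 < p) :
    momentCov (fun i => if i = i₀ then 1 else ε) p ≤
      ((Fintype.card ι : ℝ) - 1) / (Fintype.card ι : ℝ) ^ 2 := by
  have hn1 : (0 : ℝ) ≤ Fintype.card ι - 1 :=
    sub_nonneg.2 (Nat.one_le_cast.2 (Fintype.card_pos_iff.2 ⟨i₀⟩))
  have hεp : ε ^ (p - 1) ≤ 1 := Real.rpow_le_one hε0.le hε1 (by linarith)
  have hεp0 : 0 < ε ^ (p - 1) := Real.rpow_pos_of_pos hε0 _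
  have hmul : ε ^ (p - 1) * ε = ε ^ p := by rw [← Real.rpow_add_one hε0.ne', sub_add_cancel]
  have hcov : momentCov (fun i => if i = i₀ then 1 else ε) p =
      ((Fintype.card ι : ℝ) - 1) * ((1 - ε) * (1 - ε ^ (p - 1))) / (Fintype.card ι : ℝ) ^ 2 := by
    rw [momentCov, moment_ite, moment_ite, moment_ite, Real.rpow_one, ← hmul]
    field_simp
    ring
  rw [hcov]
  refine div_le_div_of_nonneg_right (mul_le_of_le_one_right hn1 ?_) (sq_nonneg _)
  exact mul_le_one₀ (by linarith) (by linarith) (by linarith)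

lemma le_momentKappa_ite (i₀ : ι) {p : ℝ} (hp : 1 < p) {ε : ℝ} (hε0 : 0 < ε)
    (hε : p * (((Fintype.card ι : ℝ) - 1) * ε) ≤
      (p - 1) * Real.log (Fintype.card ι) / Fintype.card ι) :
    Real.log (Fintype.card ι) * (((Fintype.card ι : ℝ) - 1) / (Fintype.card ι : ℝ) ^ 2) ≤
      momentKappa (fun i => if i = i₀ then 1 else ε) p := by
  have hn : (1 : ℝ) ≤ Fintype.card ι := Nat.one_le_cast.2 (Fintype.card_pos_iff.2 ⟨i₀⟩)
  set n : ℝ := (Fintype.card ι : ℝ)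
  have hn0 : 0 < n := by linarith
  have hlog : 0 ≤ Real.log n := Real.log_nonneg hn
  have hp1 : 0 < p - 1 := by linarith
  have hεp : 0 < ε ^ p := Real.rpow_pos_of_pos hε0 _
  have hT1 : 0 < 1 + (n - 1) * ε := by nlinarith
  have hTp : 1 ≤ 1 + (n - 1) * ε ^ p := by nlinarith
  have hlogT1 : Real.log ((1 + (n - 1) * ε) / n) ≤ (n - 1) * ε - Real.log n := by
    rw [Real.log_div hT1.ne' hn0.ne']
    linarith [Real.log_le_sub_one_of_pos hT1]
  have hlogTp : -Real.log n ≤ Real.log ((1 + (n - 1) * ε ^ p) / n) := by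
    rw [← Real.log_inv, ← one_div]
    exact Real.log_le_log (by positivity) (div_le_div_of_nonneg_right hTp hn0.le)
  have hratio : (p - 1) * Real.log n * ((n - 1) / n) ≤
      Real.log ((1 + (n - 1) * ε ^ p) / n / ((1 + (n - 1) * ε) / n) ^ p) := by
    rw [Real.log_div (by positivity) (by positivity), Real.log_rpow (by positivity)]
    have hsplit : (p - 1) * Real.log n * ((n - 1) / n) =
        (p - 1) * Real.log n - (p - 1) * Real.log n / n := by
      field_simp
    nlinarith [mul_le_mul_of_nonneg_left hlogT1 (by linarith : (0 : ℝ) ≤ p)]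
  rw [momentKappa, moment_ite, moment_ite, Real.rpow_one]
  calc Real.log n * ((n - 1) / n ^ 2)
      = 1 / (p - 1) * (1 / n) * ((p - 1) * Real.log n * ((n - 1) / n)) := by
        field_simp
    _ ≤ _ := by gcongr

lemma exists_pos_momentCov_le_le_momentKappa (hn : 1 < Fintype.card ι) {p : ℝ} (hp : 1 < p) :
    ∃ μ : ι → ℝ, (∀ i, 0 < μ i) ∧
      momentCov μ p ≤ ((Fintype.card ι : ℝ) - 1) / (Fintype.card ι : ℝ) ^ 2 ∧
      Real.log (Fintype.card ι) * (((Fintype.card ι : ℝ) - 1) / (Fintype.card ι : ℝ) ^ 2) ≤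
        momentKappa μ p := by
  obtain ⟨i₀⟩ : Nonempty ι := Fintype.card_pos_iff.1 (by omega)
  have hn2 : (2 : ℝ) ≤ Fintype.card ι := by exact_mod_cast hn
  set n : ℝ := (Fintype.card ι : ℝ)
  have hn1 : 0 < n - 1 := by linarith
  have hlog : 0 < Real.log n := Real.log_pos (by linarith)
  have hp1 : 0 < p - 1 := by linarith
  set ε := (p - 1) * Real.log n / (p * n * (n - 1))
  have hε0 : 0 < ε := by positivity
  have hε1 : ε ≤ 1 := by
    rw [div_le_one (by positivity)]
    calc (p - 1) * Real.log n ≤ p * n := by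
          nlinarith [Real.log_le_sub_one_of_pos (by positivity : 0 < n)]
      _ ≤ p * n * (n - 1) := le_mul_of_one_le_right (by positivity) (by linarith)
  have hε : p * ((n - 1) * ε) ≤ (p - 1) * Real.log n / n := by
    refine le_of_eq ?_
    simp only [ε]
    field_simp
  refine ⟨fun i => if i = i₀ then 1 else ε, fun i => by dsimp only; split_ifs <;> positivity,
    momentCov_ite_le i₀ hε0 hε1 hp, le_momentKappa_ite i₀ hp hε0 hε⟩

end TestVector

end Moments

section Spectral

open scoped MatrixOrder

variable {ι : Type*} [Fintype ι]

lemma rtr_smul (a : ℝ) (A : Matrix ι ι ℂ) : rtr (a • A) = a * rtr A := by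
  rw [rtr, ← Complex.coe_smul, Matrix.trace_smul, smul_eq_mul, Complex.re_ofReal_mul, rtr]

lemma rtr_sub (A B : Matrix ι ι ℂ) : rtr (A - B) = rtr A - rtr B := by
  rw [rtr, Matrix.trace_sub, Complex.sub_re, rtr, rtr]

variable [DecidableEq ι]

lemma mpow_eq_cfc {A : Matrix ι ι ℂ} (hA : A.IsHermitian) (c : ℝ) :
    mpow A c = cfc (fun x : ℝ => x ^ c) A := by
  rw [hA.cfc_eq, Matrix.IsHermitian.cfc, Unitary.conjStarAlgAut_apply, mpow, dif_pos hA]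
  rfl

lemma rtr_cfc {A : Matrix ι ι ℂ} (hA : A.IsHermitian) (f : ℝ → ℝ) :
    rtr (cfc f A) = ∑ i, f (hA.eigenvalues i) := by
  rw [rtr, hA.cfc_eq, Matrix.IsHermitian.cfc, Unitary.conjStarAlgAut_apply,
    Matrix.trace_mul_cycle, Unitary.coe_star_mul_self, one_mul, Matrix.trace_diagonal,
    Complex.re_sum]
  rfl

lemma sum_eigenvalues_diagonal {v : ι → ℝ} (h : (Matrix.diagonal fun i => (v i : ℂ)).IsHermitian)
    (f : ℝ → ℝ) : ∑ i, f (h.eigenvalues i) = ∑ i, f (v i) := by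
  have hroots := h.roots_charpoly_eq_eigenvalues
  rw [Matrix.charpoly_diagonal, Polynomial.roots_prod _ _
    (Finset.prod_ne_zero_iff.2 fun i _ => Polynomial.X_sub_C_ne_zero _)] at hroots
  simp only [Polynomial.roots_X_sub_C, Multiset.bind_singleton] at hroots
  have := congrArg (fun m => (m.map (f ∘ RCLike.re)).sum) hroots
  simp only [Multiset.map_map, Function.comp_def, RCLike.ofReal_re] at this
  exact this.symm

lemma moment_eigenvalues_diagonal {v : ι → ℝ}
    (h : (Matrix.diagonal fun i => (v i : ℂ)).IsHermitian) (k : ℝ) :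
    moment h.eigenvalues k = moment v k := by
  rw [moment_eq_inv_card_mul_sum, moment_eq_inv_card_mul_sum,
    sum_eigenvalues_diagonal h (fun x => x ^ k)]

variable {X : Matrix ι ι ℂ}

lemma cfc_rpow_smul (hX : X.PosDef) {a : ℝ} (ha : 0 ≤ a) (c : ℝ) :
    cfc (fun x : ℝ => x ^ c) (a • X) = a ^ c • cfc (fun x : ℝ => x ^ c) X := by
  have := hX.isHermitian.isSelfAdjoint
  rw [← cfc_comp_smul a _ X ((Set.toFinite _).continuousOn _),
    ← cfc_smul _ _ X ((Set.toFinite _).continuousOn _)]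
  exact cfc_congr fun x hx => by
    simp only [smul_eq_mul, Real.mul_rpow ha (hX.isStrictlyPositive.spectrum_pos hx).le]

lemma cfc_rpow_sub_one_mul_self (hX : X.PosDef) (p : ℝ) :
    cfc (fun x : ℝ => x ^ (p - 1)) X * X = cfc (fun x : ℝ => x ^ p) X := by
  have := hX.isHermitian.isSelfAdjoint
  nth_rewrite 2 [← cfc_id' ℝ X]
  rw [← cfc_mul _ _ X ((Set.toFinite _).continuousOn _) ((Set.toFinite _).continuousOn _)]
  exact cfc_congr fun x hx => by
    rw [Real.rpow_sub_one (hX.isStrictlyPositive.spectrum_pos hx).ne',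
      div_mul_cancel₀ _ (hX.isStrictlyPositive.spectrum_pos hx).ne']

lemma mabs_of_posDef (hX : X.PosDef) : mabs X = X := by
  have := hX.isHermitian.isSelfAdjoint
  rw [mabs, ← Matrix.star_eq_conjTranspose, mpow_eq_cfc (IsSelfAdjoint.star_mul_self X),
    this.star_eq, ← cfc_id' ℝ X,
    ← cfc_mul _ _ X ((Set.toFinite _).continuousOn _) ((Set.toFinite _).continuousOn _),
    ← cfc_comp' _ _ X ((Set.toFinite _).continuousOn _) ((Set.toFinite _).continuousOn _)]
  exact cfc_congr fun x hx => by
    rw [← sq, ← Real.rpow_natCast, ← Real.rpow_mul (hX.isStrictlyPositive.spectrum_pos hx).le]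
    norm_num

lemma mpow_smul_of_posDef (hX : X.PosDef) {a : ℝ} (ha : 0 < a) (c : ℝ) :
    mpow (a • X) c = a ^ c • cfc (fun x : ℝ => x ^ c) X := by
  rw [mpow_eq_cfc (hX.smul ha).isHermitian, cfc_rpow_smul hX ha.le]

end Spectral

section ScalarState

variable {ι : Type*} [Fintype ι] [DecidableEq ι]

lemma mpow_smul_one (s c : ℝ) :
    mpow ((s : ℂ) • (1 : Matrix ι ι ℂ)) c = ((s ^ c : ℝ) : ℂ) • 1 := by
  have h : (s : ℂ) • (1 : Matrix ι ι ℂ) = algebraMap ℝ _ s := by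
    rw [Algebra.algebraMap_eq_smul_one, Complex.coe_smul]
  rw [h, mpow_eq_cfc (IsSelfAdjoint.algebraMap (Matrix ι ι ℂ) (.all s)), cfc_algebraMap,
    Algebra.algebraMap_eq_smul_one, Complex.coe_smul]

lemma smul_one_mul_mul_smul_one (a b : ℝ) (X : Matrix ι ι ℂ) :
    (a : ℂ) • (1 : Matrix ι ι ℂ) * X * ((b : ℂ) • 1) = (a * b) • X := by
  rw [Matrix.smul_mul, Matrix.mul_smul, one_mul, mul_one, smul_smul, ← Complex.ofReal_mul,
    Complex.coe_smul, mul_comm]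

lemma hatMap_smul_one {s : ℝ} (hs : 0 < s) (L : Matrix ι ι ℂ →ₗ[ℂ] Matrix ι ι ℂ) :
    hatMap ((s : ℂ) • 1) L = L := by
  ext1 X
  have h : s ^ (1/2 : ℝ) * s ^ (1/2 : ℝ) * (s ^ (-(1/2 : ℝ)) * s ^ (-(1/2 : ℝ))) = 1 := by
    rw [← Real.rpow_add hs, ← Real.rpow_add hs, ← Real.rpow_add hs]
    norm_num
  simp only [hatMap, LinearMap.comp_apply, conjLin, LinearMap.coe_mk, AddHom.coe_mk,
    mpow_smul_one, smul_one_mul_mul_smul_one, ← Complex.coe_smul, map_smul, smul_smul,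
    ← Complex.ofReal_mul]
  rw [h, Complex.ofReal_one, one_smul]

lemma winner_smul_one {s : ℝ} (hs : 0 ≤ s) (X Y : Matrix ι ι ℂ) :
    winner ((s : ℂ) • 1) X Y = s * rtr (X * Y) := by
  rw [winner, mpow_smul_one, smul_one_mul_mul_smul_one, ← Real.rpow_add' hs (by norm_num),
    Matrix.smul_mul, rtr_smul]
  norm_num

lemma mpow_smul_one_mul_mul_mpow {s : ℝ} (hs : 0 < s) (X : Matrix ι ι ℂ) (p : ℝ) :
    mpow ((s : ℂ) • 1) (1/(2*p)) * X * mpow ((s : ℂ) • 1) (1/(2*p)) = s ^ (1/p) • X := by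
  rw [mpow_smul_one, smul_one_mul_mul_smul_one, ← Real.rpow_add hs]
  congr 2
  ring

variable {s : ℝ} {X : Matrix ι ι ℂ}

lemma wnorm_smul_one (hs : 0 < s) (hX : X.PosDef) {p : ℝ} (hp : p ≠ 0) :
    wnorm ((s : ℂ) • 1) p X = (s * ∑ i, hX.isHermitian.eigenvalues i ^ p) ^ (1/p) := by
  have ha : 0 < s ^ (1/p) := Real.rpow_pos_of_pos hs _
  rw [wnorm, mpow_smul_one_mul_mul_mpow hs, mabs_of_posDef (hX.smul ha),
    mpow_smul_of_posDef hX ha, rtr_smul, rtr_cfc, ← Real.rpow_mul hs.le, one_div_mul_cancel hp,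
    Real.rpow_one]

lemma Ipow_smul_one (hs : 0 < s) (hX : X.PosDef) (r : ℝ) {p : ℝ} (hp : p ≠ 0) :
    Ipow ((s : ℂ) • 1) r p X = cfc (fun x : ℝ => x ^ (p/r)) X := by
  have h : s ^ (-(1/(2*r))) * s ^ (-(1/(2*r))) * (s ^ (1/p)) ^ (p/r) = 1 := by
    rw [← Real.rpow_mul hs.le, ← Real.rpow_add hs, ← Real.rpow_add hs,
      show -(1/(2*r)) + -(1/(2*r)) + 1/p * (p/r) = 0 by field_simp; ring, Real.rpow_zero]
  rw [Ipow, mpow_smul_one_mul_mul_mpow hs, mpow_smul_of_posDef hX (Real.rpow_pos_of_pos hs _),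
    mpow_smul_one, smul_one_mul_mul_smul_one, smul_smul, h, one_smul]

end ScalarState

section MaximallyMixed

variable {ι : Type*} [Fintype ι] [DecidableEq ι]

lemma inv_card_smul_one :
    ((Fintype.card ι : ℂ)⁻¹ • (1 : Matrix ι ι ℂ)) = (((Fintype.card ι : ℝ)⁻¹ : ℝ) : ℂ) • 1 := by
  push_cast
  rfl

variable [Nonempty ι] {X : Matrix ι ι ℂ}

lemma wnorm_maxMixed_rpow (hX : X.PosDef) {p : ℝ} (hp : p ≠ 0) :
    wnorm ((Fintype.card ι : ℂ)⁻¹ • 1) p X ^ p = moment hX.isHermitian.eigenvalues p := by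
  rw [inv_card_smul_one, wnorm_smul_one (by positivity) hX hp, ← moment_eq_inv_card_mul_sum,
    one_div, Real.rpow_inv_rpow (moment_nonneg (fun i => (hX.eigenvalues_pos i).le) p) hp]

lemma kappa_maxMixed (hX : X.PosDef) {p : ℝ} (hp : p ≠ 0) :
    kappa ((Fintype.card ι : ℂ)⁻¹ • 1) p X = momentKappa hX.isHermitian.eigenvalues p := by
  have h1 := wnorm_maxMixed_rpow hX one_ne_zero
  rw [Real.rpow_one] at h1
  rw [kappa, wnorm_maxMixed_rpow hX hp, h1, momentKappa]

lemma dirichlet_depol_maxMixed (hX : X.PosDef) {p : ℝ} (hp : p ≠ 0) :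
    dirichlet ((Fintype.card ι : ℂ)⁻¹ • 1) (depol ((Fintype.card ι : ℂ)⁻¹ • 1)) p X =
      p / (2 * (p - 1)) * momentCov hX.isHermitian.eigenvalues p := by
  set n : ℝ := (Fintype.card ι : ℝ)⁻¹
  have hn : 0 < n := by positivity
  have hdepol : depol ((n : ℂ) • 1) X = (n * ∑ i, hX.isHermitian.eigenvalues i) • 1 - X := by
    rw [depol, LinearMap.coe_mk, AddHom.coe_mk, hX.isHermitian.trace_eq_sum_eigenvalues,
      smul_smul, ← Complex.coe_smul]
    push_cast
    rw [mul_comm]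
    rfl
  have hrtr : rtr (cfc (fun x : ℝ => x ^ (p - 1)) X *
      ((n * ∑ i, hX.isHermitian.eigenvalues i) • 1 - X)) =
      n * (∑ i, hX.isHermitian.eigenvalues i) * ∑ i, hX.isHermitian.eigenvalues i ^ (p - 1) -
        ∑ i, hX.isHermitian.eigenvalues i ^ p := by
    rw [Matrix.mul_sub, Matrix.mul_smul, mul_one, cfc_rpow_sub_one_mul_self hX, rtr_sub,
      rtr_smul, rtr_cfc hX.isHermitian, rtr_cfc hX.isHermitian]
  have hexp : p / (p / (p - 1)) = p - 1 := by field_simp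
  rw [dirichlet, inv_card_smul_one, hatMap_smul_one hn, Ipow_smul_one hn hX _ hp,
    winner_smul_one hn.le, hexp, hdepol, hrtr]
  simp only [momentCov, moment_eq_inv_card_mul_sum, Real.rpow_one]
  ring

end MaximallyMixed

section Beta

variable {ι : Type*} [Fintype ι] [DecidableEq ι]

lemma le_of_mul_kappa_le_dirichlet (hn : 1 < Fintype.card ι) {p : ℝ} (hp : 1 < p) {β : ℝ}
    (hβ : 0 ≤ β) (h : ∀ X : Matrix ι ι ℂ, X.PosDef →
      β * kappa ((Fintype.card ι : ℂ)⁻¹ • 1) p X ≤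
        dirichlet ((Fintype.card ι : ℂ)⁻¹ • 1) (depol ((Fintype.card ι : ℂ)⁻¹ • 1)) p X) :
    β ≤ p / (2 * (p - 1)) * (1 / Real.log (Fintype.card ι)) := by
  have : Nonempty ι := Fintype.card_pos_iff.1 (by omega)
  have hn1 : (1 : ℝ) < Fintype.card ι := Nat.one_lt_cast.2 hn
  obtain ⟨v, hv, hcov, hκ⟩ := exists_pos_momentCov_le_le_momentKappa hn hp
  have hD : (Matrix.diagonal fun i => (v i : ℂ)).PosDef :=
    Matrix.posDef_diagonal_iff.2 fun i => by exact_mod_cast hv i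
  have hXD := h _ hD
  rw [kappa_maxMixed hD (by linarith), dirichlet_depol_maxMixed hD (by linarith)] at hXD
  simp only [momentKappa, momentCov, moment_eigenvalues_diagonal] at hXD hcov hκ
  have hc : 0 ≤ p / (2 * (p - 1)) := div_nonneg (by linarith) (by linarith)
  have hkey := (mul_le_mul_of_nonneg_left hκ hβ).trans
    (hXD.trans (mul_le_mul_of_nonneg_left hcov hc))
  rw [← mul_assoc] at hkey
  rw [mul_one_div, le_div_iff₀ (Real.log_pos hn1)]
  exact le_of_mul_le_mul_right hkey (div_pos (by linarith) (by positivity))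

lemma mul_kappa_le_dirichlet (hn : 1 < Fintype.card ι) {p : ℝ} (hp : 2 ≤ p) {X : Matrix ι ι ℂ}
    (hX : X.PosDef) :
    p / (2 * (p - 1)) * (((Fintype.card ι : ℝ) ^ ((p - 1) / p) - 1) /
        ((Fintype.card ι : ℝ) ^ ((p - 1) / p) * Real.log (Fintype.card ι))) *
        kappa ((Fintype.card ι : ℂ)⁻¹ • 1) p X ≤
      dirichlet ((Fintype.card ι : ℂ)⁻¹ • 1) (depol ((Fintype.card ι : ℂ)⁻¹ • 1)) p X := by
  have : Nonempty ι := Fintype.card_pos_iff.1 (by omega)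
  have hn1 : (1 : ℝ) < Fintype.card ι := Nat.one_lt_cast.2 hn
  set n : ℝ := (Fintype.card ι : ℝ)
  have hlog : 0 < Real.log n := Real.log_pos hn1
  have hp0 : 0 < p := by linarith
  have hD0 : 0 < n ^ ((p - 1) / p) := by positivity
  have hDn : n ^ ((p - 1) / p) ≤ n := by
    conv_rhs => rw [← Real.rpow_one n]
    exact Real.rpow_le_rpow_of_exponent_le hn1.le (by rw [div_le_one hp0]; linarith)
  have hcoef : (n ^ ((p - 1) / p) - 1) / (n ^ ((p - 1) / p) * Real.log n) ≤
      (1 - n⁻¹) / Real.log n := by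
    rw [← div_div, sub_div, div_self hD0.ne', one_div]
    gcongr
  rw [kappa_maxMixed hX hp0.ne', dirichlet_depol_maxMixed hX hp0.ne', mul_assoc]
  have hκ := momentKappa_nonneg (fun i => hX.eigenvalues_pos i) (p := p) (by linarith)
  refine mul_le_mul_of_nonneg_left ?_ (div_nonneg (by linarith) (by linarith))
  exact (mul_le_mul_of_nonneg_right hcoef hκ).trans
    (one_sub_inv_card_div_log_mul_momentKappa_le (fun i => hX.eigenvalues_pos i) hn hp)

lemma betaP_depol_maxMixed_le (hn : 1 < Fintype.card ι) {p : ℝ} (hp : 1 < p) :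
    betaP ((Fintype.card ι : ℂ)⁻¹ • (1 : Matrix ι ι ℂ))
        (depol ((Fintype.card ι : ℂ)⁻¹ • (1 : Matrix ι ι ℂ))) p ≤
      p / (2 * (p - 1)) * (1 / Real.log (Fintype.card ι)) := by
  have hlog : 0 < Real.log (Fintype.card ι) := Real.log_pos (Nat.one_lt_cast.2 hn)
  have hc : 0 ≤ p / (2 * (p - 1)) := div_nonneg (by linarith) (by linarith)
  exact Real.sSup_le (fun β hβ => le_of_mul_kappa_le_dirichlet hn hp hβ.1 hβ.2)
    (mul_nonneg hc (by positivity))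

lemma le_betaP_depol_maxMixed (hn : 1 < Fintype.card ι) {p : ℝ} (hp : 2 ≤ p) :
    p / (2 * (p - 1)) * (((Fintype.card ι : ℝ) ^ ((p - 1) / p) - 1) /
        ((Fintype.card ι : ℝ) ^ ((p - 1) / p) * Real.log (Fintype.card ι))) ≤
      betaP ((Fintype.card ι : ℂ)⁻¹ • (1 : Matrix ι ι ℂ))
        (depol ((Fintype.card ι : ℂ)⁻¹ • (1 : Matrix ι ι ℂ))) p := by
  have hn1 : (1 : ℝ) < Fintype.card ι := Nat.one_lt_cast.2 hn
  have hlog : 0 < Real.log (Fintype.card ι) := Real.log_pos hn1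
  have hD : 1 ≤ (Fintype.card ι : ℝ) ^ ((p - 1) / p) :=
    Real.one_le_rpow hn1.le (div_nonneg (by linarith) (by linarith))
  have hc : 0 ≤ p / (2 * (p - 1)) := div_nonneg (by linarith) (by linarith)
  refine le_csSup ⟨_, fun β hβ => le_of_mul_kappa_le_dirichlet hn (by linarith) hβ.1 hβ.2⟩
    ⟨mul_nonneg hc (div_nonneg (by linarith) (by positivity)),
      fun X hX => mul_kappa_le_dirichlet hn hp hX⟩

end Beta

/-- Bounds on `β_p` for the Liouvillian depolarizing to the
maximally mixed state. -/
theorem statement_4 {d : ℕ} (hd : 2 ≤ d) (p : ℝ) (hp : 2 ≤ p) :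
    betaP ((d : ℂ)⁻¹ • (1 : Matrix (Fin d) (Fin d) ℂ))
        (depol ((d : ℂ)⁻¹ • (1 : Matrix (Fin d) (Fin d) ℂ))) p ≤
      (p/(2*(p-1))) * (1 / Real.log d) ∧
    (p/(2*(p-1))) * (((d:ℝ) ^ ((p-1)/p) - 1) / ((d:ℝ) ^ ((p-1)/p) * Real.log d)) ≤
      betaP ((d : ℂ)⁻¹ • (1 : Matrix (Fin d) (Fin d) ℂ))
        (depol ((d : ℂ)⁻¹ • (1 : Matrix (Fin d) (Fin d) ℂ))) p := by
  have hcard : 1 < Fintype.card (Fin d) := by rw [Fintype.card_fin]; omega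
  have hupper := betaP_depol_maxMixed_le hcard (p := p) (by linarith)
  have hlower := le_betaP_depol_maxMixed hcard hp
  rw [Fintype.card_fin] at hupper hlower
  exact ⟨hupper, hlower⟩

end SRC
end
end
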